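/- Factoring upper bound at the boundary direction: let K ⊆ ℂ^d be compact and circled, and let α(j) be multi-indices with |α(j)| → ∞ and α(j)/|α(j)| → (1, 0, …, 0). Write α(j) = (α₁(j), α'(j)) and ε_j := |α'(j)|/|α(j)| → 0. Then limsup_{j→∞} τ_{K,α(j)} ≤ max_{z ∈ K} |z₁|, where τ_{K,α} := inf{ (sup_K |p|)^{1/|α|} : p ∈ M_α }. -/

import Mathlib

/-!
The monomial `z^α` itself lies in the monic class `M_α` (for any order), so `τ_{K,α} ≤ (sup_K |z^α|)^{1/|α|}`.
If `|z₁| ≤ M` and `|zᵢ| ≤ R` on `K`, this is at most `M^{α₁/|α|} R^{1 - α₁/|α|}`, which tends to `M`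
as `α₁/|α| → 1`.
-/

open MvPolynomial Filter

/-- Total degree (length) of a multi-index. -/
def degF {d : ℕ} (α : Fin d →₀ ℕ) : ℕ := α.sum fun _ n => n

/-- Sup norm of a polynomial on a set. -/
noncomputable def supNorm {d : ℕ} (K : Set (Fin d → ℂ)) (p : MvPolynomial (Fin d) ℂ) : ℝ :=
  sSup ((fun z => ‖MvPolynomial.eval z p‖) '' K)

/-- The monic class `M_α` with respect to a strict order `prec` on multi-indices. -/
def MonicClass {d : ℕ} (prec : (Fin d →₀ ℕ) → (Fin d →₀ ℕ) → Prop)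
    (α : Fin d →₀ ℕ) (p : MvPolynomial (Fin d) ℂ) : Prop :=
  MvPolynomial.coeff α p = 1 ∧ ∀ β ∈ p.support, β ≠ α → prec β α

/-- The directional Chebyshev constant `τ_{K,α}`. -/
noncomputable def tau {d : ℕ} (K : Set (Fin d → ℂ))
    (prec : (Fin d →₀ ℕ) → (Fin d →₀ ℕ) → Prop) (α : Fin d →₀ ℕ) : ℝ :=
  sInf ((fun p => supNorm K p ^ ((degF α : ℝ)⁻¹)) '' {p | MonicClass prec α p})

/-- Graded lexicographic-type order with `z₁ ≺ z₂ ≺ ⋯ ≺ z_d`: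
`β ≺ α` iff `|β| < |α|`, or the degrees agree and at the first index where they
differ `β` has the *larger* exponent (so `z₁^n` is smallest in its degree class). -/
def gLex {d : ℕ} (β α : Fin d →₀ ℕ) : Prop :=
  degF β < degF α ∨ (degF β = degF α ∧ Finsupp.Lex (· < ·) (· < ·) α β)

open Topology

lemma degF_eq_sum {d : ℕ} (α : Fin d →₀ ℕ) : degF α = ∑ i, α i :=
  Finsupp.sum_fintype _ _ fun _ => rfl

lemma supNorm_nonneg {d : ℕ} (K : Set (Fin d → ℂ)) (p : MvPolynomial (Fin d) ℂ) :
    0 ≤ supNorm K p :=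
  Real.sSup_nonneg (by rintro x ⟨z, _, rfl⟩; positivity)

lemma monicClass_monomial_one {d : ℕ} (prec : (Fin d →₀ ℕ) → (Fin d →₀ ℕ) → Prop)
    (α : Fin d →₀ ℕ) : MonicClass prec α (monomial α (1 : ℂ)) := by
  refine ⟨by simp [coeff_monomial], fun β hβ hne => absurd ?_ hne⟩
  simpa [support_monomial] using hβ

lemma tau_nonneg {d : ℕ} (K : Set (Fin d → ℂ))
    (prec : (Fin d →₀ ℕ) → (Fin d →₀ ℕ) → Prop) (α : Fin d →₀ ℕ) :
    0 ≤ tau K prec α :=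
  Real.sInf_nonneg (by rintro x ⟨p, _, rfl⟩; exact Real.rpow_nonneg (supNorm_nonneg _ _) _)

lemma tau_le_of_monicClass {d : ℕ} (K : Set (Fin d → ℂ))
    {prec : (Fin d →₀ ℕ) → (Fin d →₀ ℕ) → Prop} {α : Fin d →₀ ℕ} {p : MvPolynomial (Fin d) ℂ}
    (hp : MonicClass prec α p) :
    tau K prec α ≤ supNorm K p ^ ((degF α : ℝ)⁻¹) :=
  csInf_le ⟨0, by rintro x ⟨q, _, rfl⟩; exact Real.rpow_nonneg (supNorm_nonneg _ _) _⟩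
    ⟨p, hp, rfl⟩

lemma norm_eval_monomial_one {d : ℕ} (z : Fin d → ℂ) (β : Fin d →₀ ℕ) :
    ‖eval z (monomial β (1 : ℂ))‖ = ∏ i, ‖z i‖ ^ β i := by
  rw [eval_monomial, one_mul, Finsupp.prod_fintype _ _ fun i => pow_zero (z i), norm_prod]
  simp only [norm_pow]

section CoordinateBounds

variable {d : ℕ} {K : Set (Fin d → ℂ)} {M R : ℝ} (i₀ : Fin d)

lemma supNorm_monomial_one_le (hM : 0 ≤ M) (hR : 0 ≤ R)
    (hKM : ∀ z ∈ K, ‖z i₀‖ ≤ M) (hKR : ∀ z ∈ K, ∀ i, ‖z i‖ ≤ R) (β : Fin d →₀ ℕ) :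
    supNorm K (monomial β (1 : ℂ)) ≤ M ^ β i₀ * R ^ (degF β - β i₀) := by
  have hrest : ∑ i ∈ Finset.univ.erase i₀, β i = degF β - β i₀ := by
    rw [degF_eq_sum, ← Finset.add_sum_erase _ _ (Finset.mem_univ i₀), Nat.add_sub_cancel_left]
  refine Real.sSup_le ?_ (by positivity)
  rintro x ⟨z, hz, rfl⟩
  dsimp only
  rw [norm_eval_monomial_one, ← Finset.mul_prod_erase _ _ (Finset.mem_univ i₀), ← hrest,
    ← Finset.prod_pow_eq_pow_sum]
  gcongr with i
  exacts [hKM z hz, hKR z hz i]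

lemma tau_le_rpow_mul_rpow (prec : (Fin d →₀ ℕ) → (Fin d →₀ ℕ) → Prop) (hM : 0 ≤ M) (hR : 0 ≤ R)
    (hKM : ∀ z ∈ K, ‖z i₀‖ ≤ M) (hKR : ∀ z ∈ K, ∀ i, ‖z i‖ ≤ R) {β : Fin d →₀ ℕ}
    (hβ : degF β ≠ 0) :
    tau K prec β ≤ M ^ ((β i₀ : ℝ) / degF β) * R ^ (1 - (β i₀ : ℝ) / degF β) := by
  have hle : β i₀ ≤ degF β := by
    rw [degF_eq_sum]; exact Finset.single_le_sum (fun i _ => Nat.zero_le _) (Finset.mem_univ i₀)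
  have hD : (degF β : ℝ) ≠ 0 := by exact_mod_cast hβ
  calc tau K prec β ≤ supNorm K (monomial β (1 : ℂ)) ^ ((degF β : ℝ)⁻¹) :=
        tau_le_of_monicClass K (monicClass_monomial_one prec β)
    _ ≤ (M ^ β i₀ * R ^ (degF β - β i₀)) ^ ((degF β : ℝ)⁻¹) := by
        gcongr
        · exact supNorm_nonneg _ _
        · exact supNorm_monomial_one_le i₀ hM hR hKM hKR β
    _ = M ^ ((β i₀ : ℝ) / degF β) * R ^ (1 - (β i₀ : ℝ) / degF β) := by
        rw [← Real.rpow_natCast M, ← Real.rpow_natCast R,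
          Real.mul_rpow (by positivity) (by positivity), ← Real.rpow_mul hM, ← Real.rpow_mul hR,
          Nat.cast_sub hle, sub_mul, mul_inv_cancel₀ hD, div_eq_mul_inv]

end CoordinateBounds

lemma tendsto_rpow_mul_rpow_one_sub {ι : Type*} {l : Filter ι} {a : ι → ℝ} (M : ℝ) {R : ℝ}
    (hR : R ≠ 0) (ha : Tendsto a l (𝓝 1)) :
    Tendsto (fun j => M ^ a j * R ^ (1 - a j)) l (𝓝 M) := by
  have hMpow : Tendsto (fun j => M ^ a j) l (𝓝 (M ^ (1 : ℝ))) :=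
    tendsto_const_nhds.rpow ha (Or.inr one_pos)
  have hRpow : Tendsto (fun j => R ^ (1 - a j)) l (𝓝 (R ^ (1 - 1 : ℝ))) :=
    tendsto_const_nhds.rpow (tendsto_const_nhds.sub ha) (Or.inl hR)
  simpa using hMpow.mul hRpow

theorem limsup_cheb_first_direction_general {d : ℕ} (K : Set (Fin (d + 1) → ℂ))
    (hK : IsCompact K)
    (α : ℕ → Fin (d + 1) →₀ ℕ)
    (hdeg : Tendsto (fun j => degF (α j)) atTop atTop)
    (hdir : Tendsto (fun j (i : Fin (d + 1)) => ((α j i : ℝ) / (degF (α j) : ℝ)))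
      atTop (nhds fun i => if i = 0 then (1 : ℝ) else 0)) :
    limsup (fun j => tau K gLex (α j)) atTop ≤ sSup ((fun z => ‖z 0‖) '' K) := by
  obtain ⟨R, hR, hKnorm⟩ := hK.isBounded.exists_pos_norm_le
  have hKR : ∀ z ∈ K, ∀ i, ‖z i‖ ≤ R := fun z hz i => (norm_le_pi_norm z i).trans (hKnorm z hz)
  set M := sSup ((fun z => ‖z 0‖) '' K)
  have hM : 0 ≤ M := Real.sSup_nonneg (by rintro x ⟨z, _, rfl⟩; positivity)
  have hKM : ∀ z ∈ K, ‖z 0‖ ≤ M := fun z hz =>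
    le_csSup ⟨R, by rintro x ⟨w, hw, rfl⟩; exact hKR w hw 0⟩ ⟨z, hz, rfl⟩
  have hfirst : Tendsto (fun j => (α j 0 : ℝ) / degF (α j)) atTop (𝓝 1) := by
    simpa using tendsto_pi_nhds.mp hdir 0
  have hbound := tendsto_rpow_mul_rpow_one_sub M hR.ne' hfirst
  refine (limsup_le_limsup ?_ ?_ hbound.isBoundedUnder_le).trans hbound.limsup_eq.le
  · filter_upwards [hdeg.eventually_ge_atTop 1] with j hj
    exact tau_le_rpow_mul_rpow 0 gLex hM hR.le hKM hKR (by omega)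
  · exact isBoundedUnder_of ⟨0, fun j => tau_nonneg K gLex (α j)⟩ |>.isCoboundedUnder_le

/-- for a compact circled `K` and multi-indices `α(j)` with
`|α(j)| → ∞` and `α(j)/|α(j)| → (1,0,…,0)`,
`limsup_j τ_{K,α(j)} ≤ max_{z∈K} |z₁|`. -/
theorem limsup_cheb_first_direction {d : ℕ} (K : Set (Fin (d + 1) → ℂ))
    (hK : IsCompact K) (hne : K.Nonempty)
    (hcirc : ∀ z ∈ K, ∀ φ : ℝ, (fun i => Complex.exp (φ * Complex.I) * z i) ∈ K)
    (α : ℕ → Fin (d + 1) →₀ ℕ)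
    (hdeg : Tendsto (fun j => degF (α j)) atTop atTop)
    (hdir : Tendsto (fun j (i : Fin (d + 1)) => ((α j i : ℝ) / (degF (α j) : ℝ)))
      atTop (nhds fun i => if i = 0 then (1 : ℝ) else 0)) :
    limsup (fun j => tau K gLex (α j)) atTop ≤ sSup ((fun z => ‖z 0‖) '' K) :=
  limsup_cheb_first_direction_general K hK α hdeg hdir
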